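/- For constants a > 0 and b > 0, the function f(x) = a·log σ(x) + b·log σ(−x), where σ(x) = 1/(1+e^{−x}), attains its unique maximum at x = log(a/b). -/

import Mathlib

/-!
With `p = σ x` we have `σ (-x) = 1 - p` and `σ (log (a / b)) = a / (a + b)`, so the claim is the
two-point Gibbs inequality `a log p + b log (1 - p) < a log q + b log (1 - q)` for
`q = a / (a + b) ≠ p`. Apply `log t < t - 1` (`t ≠ 1`) to `p / q` and `(1 - p) / (1 - q)`: the
weighted sum of the right-hand sides, `(a + b) p - a + (a + b) (1 - p) - b`, vanishes.
-/

noncomputable def sigmoid (x : ℝ) : ℝ := 1 / (1 + Real.exp (-x))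

lemma sigmoid_eq_real_sigmoid : sigmoid = Real.sigmoid := by
  ext x
  rw [sigmoid, one_div, Real.sigmoid_def]

lemma Real.sigmoid_log_div {a b : ℝ} (ha : 0 < a) (hb : 0 < b) :
    Real.sigmoid (Real.log (a / b)) = a / (a + b) := by
  rw [Real.sigmoid_def, ← Real.log_inv, Real.exp_log (by positivity), inv_div]
  field_simp

lemma mul_log_div_lt {a x y : ℝ} (ha : 0 < a) (hx : 0 < x) (hy : 0 < y) (hxy : x ≠ y) :
    a * Real.log (x / y) < a * (x / y - 1) :=
  mul_lt_mul_of_pos_left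
    (Real.log_lt_sub_one_of_pos (div_pos hx hy) (by rwa [ne_eq, div_eq_one_iff_eq hy.ne'])) ha

lemma mul_log_add_mul_log_one_sub_lt {a b p : ℝ} (ha : 0 < a) (hb : 0 < b)
    (hp₀ : 0 < p) (hp₁ : p < 1) (hp : p ≠ a / (a + b)) :
    a * Real.log p + b * Real.log (1 - p) <
      a * Real.log (a / (a + b)) + b * Real.log (b / (a + b)) := by
  have hq : 1 - a / (a + b) = b / (a + b) := by field_simp; ring
  have hpq : 1 - p ≠ b / (a + b) := by rwa [← hq, ne_eq, sub_right_inj]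
  have h₁ := mul_log_div_lt ha hp₀ (by positivity) hp
  have h₂ := mul_log_div_lt hb (sub_pos.mpr hp₁) (by positivity) hpq
  rw [Real.log_div hp₀.ne' (by positivity)] at h₁
  rw [Real.log_div (sub_pos.mpr hp₁).ne' (by positivity)] at h₂
  have hsum : a * (p / (a / (a + b)) - 1) + b * ((1 - p) / (b / (a + b)) - 1) = 0 := by
    field_simp
    ring
  linarith

theorem sgns_unique_max (a b : ℝ) (ha : 0 < a) (hb : 0 < b)
    (f : ℝ → ℝ) (hf : ∀ x, f x = a * Real.log (sigmoid x) + b * Real.log (sigmoid (-x))) :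
    ∀ x : ℝ, x ≠ Real.log (a / b) → f x < f (Real.log (a / b)) := by
  intro x hx
  have hσx : Real.sigmoid x ≠ a / (a + b) := by
    rwa [← Real.sigmoid_log_div ha hb, ne_eq, Real.sigmoid_inj]
  have hσ_neg : Real.sigmoid (-Real.log (a / b)) = b / (a + b) := by
    rw [← Real.log_inv, inv_div, Real.sigmoid_log_div hb ha, add_comm]
  rw [hf, hf, sigmoid_eq_real_sigmoid, Real.sigmoid_neg x, hσ_neg, Real.sigmoid_log_div ha hb]
  exact mul_log_add_mul_log_one_sub_lt ha hb (Real.sigmoid_pos x) (Real.sigmoid_lt_one x) hσx
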